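/- If α > 1 and β − 1 ≤ α ≤ β, then the digit system (A, 𝒟) has the finiteness property: for every x ∈ ℤ²[A] there exists k ∈ ℕ with Φ^k(x) = 0. Equivalently, the set of periodic points of Φ (i.e., the attractor 𝒜_Φ) equals {0}. -/

import Mathlib

/-!
Write `q = cX² + aX + b`. Every `x ∈ ℤ²[A]` is `g(A) e₁` for some `g ∈ ℤ[X]`, and `g(A) e₁ = 0`
forces `p ∣ g` over `ℚ` (Cayley–Hamilton, `e₁` is cyclic), hence `q ∣ g` over `ℤ` by Gauss's lemma
since `q` is primitive. Evaluating at `0`, a vector `(m, 0)ᵀ ∈ A ℤ²[A]` has `b ∣ m`; so the digit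
of `x` and `Φ x` are determined by `x = d + A Φ x`.

For `1 < α ≤ β` we have `c < a ≤ b`, and the set `T = {0, ±(1,0), ±(c,0), ±(a,c), ±(a-c,c)}` has
`Φ (x + t) = Φ x + t'` with `t' ∈ T` for every `t ∈ T`: the carry bringing `ν + t₁` back into
`{0, …, b-1}` is `0` or `±1`. Each `t ∈ T` reaches `0` under `Φ`, so by induction on the time `x`
needs to reach `0`, so does `x + t`. Hence reaching `0` is preserved by `x ↦ x ± e₁` and, as
`Φ (A x) = x`, by `x ↦ A x`; Horner's scheme `x = w + A y` gives it on all of `ℤ²[A]`. Finally a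
periodic point whose orbit meets the fixed point `0` is `0`.
-/

open Matrix Polynomial

noncomputable section

/-- `ℤ²[A]`: the smallest `A`-invariant `ℤ`-module containing `ℤ²`. -/
def intSpan {n : ℕ} (A : Matrix (Fin n) (Fin n) ℚ) : Set (Fin n → ℚ) :=
  {x | ∃ (k : ℕ) (v : ℕ → Fin n → ℤ),
    x = ∑ j ∈ Finset.range (k + 1), (A ^ j).mulVec (fun i => ((v j i : ℚ)))}

/-- The digit vector `(ν, 0)ᵀ`. -/
def digitVec (ν : ℤ) : Fin 2 → ℚ := ![(ν : ℚ), 0]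

def intVec {n : ℕ} (w : Fin n → ℤ) : Fin n → ℚ := fun i => (w i : ℚ)

@[simp] lemma intVec_apply {n : ℕ} (w : Fin n → ℤ) (i : Fin n) : intVec w i = w i := rfl

@[simp] lemma intVec_zero {n : ℕ} : intVec (0 : Fin n → ℤ) = 0 := by
  ext; simp

lemma intVec_add {n : ℕ} (w w' : Fin n → ℤ) : intVec (w + w') = intVec w + intVec w' := by
  ext; simp

lemma intVec_fin_two (w : Fin 2 → ℤ) : intVec w = ![(w 0 : ℚ), w 1] := by
  ext i; fin_cases i <;> rfl

lemma intVec_zero_zero : intVec ![0, 0] = 0 := by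
  ext i; fin_cases i <;> rfl

lemma digitVec_eq_intVec (d : ℤ) : digitVec d = intVec ![d, 0] := by
  simp [digitVec, intVec_fin_two]

lemma digitVec_zero : digitVec 0 = 0 := by
  ext i; fin_cases i <;> simp [digitVec]

namespace intSpan

variable {n : ℕ} {A : Matrix (Fin n) (Fin n) ℚ}

lemma sum_range_succ_pow_mulVec (k : ℕ) (v : ℕ → Fin n → ℤ) :
    ∑ j ∈ Finset.range (k + 1), A ^ j *ᵥ intVec (v j) =
      intVec (v 0) + A *ᵥ ∑ j ∈ Finset.range k, A ^ j *ᵥ intVec (v (j + 1)) := by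
  simp only [Finset.sum_range_succ', mulVec_sum, mulVec_mulVec, pow_succ', pow_zero, one_mulVec]
  exact add_comm _ _

lemma sum_range_mem (k : ℕ) (v : ℕ → Fin n → ℤ) :
    ∑ j ∈ Finset.range k, A ^ j *ᵥ intVec (v j) ∈ intSpan A := by
  cases k with
  | zero => exact ⟨0, 0, by ext; simp⟩
  | succ k => exact ⟨k, v, rfl⟩

lemma zero_mem : (0 : Fin n → ℚ) ∈ intSpan A := by
  simpa using sum_range_mem (A := A) 0 0

lemma intVec_add_mulVec_mem {x : Fin n → ℚ} (hx : x ∈ intSpan A) (w : Fin n → ℤ) :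
    intVec w + A *ᵥ x ∈ intSpan A := by
  obtain ⟨k, v, rfl⟩ := hx
  exact ⟨k + 1, fun j => Nat.casesOn j w v,
    (sum_range_succ_pow_mulVec (A := A) (k + 1) (fun j => Nat.casesOn j w v)).symm⟩

theorem induction {P : (Fin n → ℚ) → Prop} (zero : P 0)
    (step : ∀ x ∈ intSpan A, P x → ∀ w, P (intVec w + A *ᵥ x)) :
    ∀ x ∈ intSpan A, P x := by
  suffices h : ∀ (k : ℕ) (v : ℕ → Fin n → ℤ), P (∑ j ∈ Finset.range k, A ^ j *ᵥ intVec (v j)) by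
    rintro x ⟨k, v, rfl⟩
    exact h (k + 1) v
  intro k
  induction k with
  | zero => simpa using zero
  | succ k ih =>
    intro v
    rw [sum_range_succ_pow_mulVec]
    exact step _ (sum_range_mem k _) (ih _) (v 0)

lemma add_intVec_mem {x : Fin n → ℚ} (hx : x ∈ intSpan A) (w : Fin n → ℤ) :
    x + intVec w ∈ intSpan A := by
  revert w
  refine induction (P := fun x => ∀ w, x + intVec w ∈ intSpan A)
    (fun w => by simpa using intVec_add_mulVec_mem zero_mem w) ?_ x hx
  intro x hx _ w' w
  rw [add_right_comm, ← intVec_add]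
  exact intVec_add_mulVec_mem hx _

lemma mulVec_mem {x : Fin n → ℚ} (hx : x ∈ intSpan A) : A *ᵥ x ∈ intSpan A := by
  simpa using intVec_add_mulVec_mem hx 0

end intSpan

lemma isPrimitive_of_gcd_eq_one {c a b : ℤ} (h : Int.gcd c (Int.gcd a b) = 1) :
    (C c * X ^ 2 + C a * X + C b).IsPrimitive := by
  intro r hr
  rw [C_dvd_iff_dvd_coeff] at hr
  have hc := hr 2
  have ha := hr 1
  have hb := hr 0
  simp only [coeff_add, coeff_C_mul, coeff_X_pow, coeff_X, coeff_C] at hc ha hb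
  norm_num at hc ha hb
  have := Int.dvd_coe_gcd hc (Int.dvd_coe_gcd ha hb)
  rw [h] at this
  exact isUnit_of_dvd_one (by exact_mod_cast this)

def companion (α β : ℚ) : Matrix (Fin 2) (Fin 2) ℚ := !![0, -β; 1, -α]

section Companion

variable (α β : ℚ)

lemma companion_mulVec (u v : ℚ) : companion α β *ᵥ ![u, v] = ![-β * v, u - α * v] := by
  ext i; fin_cases i <;> simp [companion, mulVec, dotProduct, sub_eq_add_neg]

lemma det_companion : (companion α β).det = β := by
  simp [companion, det_fin_two]

lemma charpoly_companion : (companion α β).charpoly = X ^ 2 + C α * X + C β := by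
  rw [charpoly_fin_two]
  simp [companion, trace_fin_two, det_fin_two]

lemma aeval_companion_mulVec_of_natDegree_lt_two {r : ℚ[X]} (hr : r.natDegree < 2) :
    aeval (companion α β) r *ᵥ ![1, 0] = ![r.coeff 0, r.coeff 1] := by
  rw [aeval_eq_sum_range' hr]
  simp only [Finset.sum_range_succ, Finset.sum_range_zero, pow_zero, pow_one, zero_add, add_mulVec,
    smul_mulVec, one_mulVec, companion_mulVec]
  ext i; fin_cases i <;> simp

lemma charpoly_dvd_of_aeval_companion_mulVec_eq_zero {f : ℚ[X]}
    (hf : aeval (companion α β) f *ᵥ ![1, 0] = 0) : (companion α β).charpoly ∣ f := by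
  have hp : (companion α β).charpoly.Monic := charpoly_monic _
  have hdeg : (f %ₘ (companion α β).charpoly).natDegree < 2 := by
    simpa [charpoly_natDegree_eq_dim] using natDegree_modByMonic_lt f hp fun h => by
      simpa [h] using charpoly_natDegree_eq_dim (companion α β)
  have hrem : aeval (companion α β) f = aeval (companion α β) (f %ₘ (companion α β).charpoly) := by
    conv_lhs => rw [← modByMonic_add_div f (companion α β).charpoly]
    simp [aeval_self_charpoly]
  rw [hrem, aeval_companion_mulVec_of_natDegree_lt_two α β hdeg] at hf
  rw [← modByMonic_eq_zero_iff_dvd hp]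
  ext n
  rw [coeff_zero]
  match n with
  | 0 => simpa using congrFun hf 0
  | 1 => simpa using congrFun hf 1
  | n + 2 => exact coeff_eq_zero_of_natDegree_lt (by omega)

variable {α β} {c a b : ℤ}

lemma map_eq_C_mul_charpoly_companion (ha : (a : ℚ) = c * α) (hb : (b : ℚ) = c * β) :
    (C c * X ^ 2 + C a * X + C b).map (Int.castRingHom ℚ) =
      C (c : ℚ) * (companion α β).charpoly := by
  simp only [Polynomial.map_add, Polynomial.map_mul, Polynomial.map_pow, map_C, map_X,
    Int.coe_castRingHom, charpoly_companion, ha, hb, C_mul]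
  ring

lemma dvd_of_aeval_companion_mulVec_eq_zero (hc : c ≠ 0) (ha : (a : ℚ) = c * α)
    (hb : (b : ℚ) = c * β) (hprim : Int.gcd c (Int.gcd a b) = 1) {g : ℤ[X]}
    (hg : aeval (companion α β) g *ᵥ ![1, 0] = 0) : C c * X ^ 2 + C a * X + C b ∣ g := by
  rw [IsPrimitive.Int.dvd_iff_map_cast_dvd_map_cast _ _ (isPrimitive_of_gcd_eq_one hprim),
    map_eq_C_mul_charpoly_companion ha hb,
    (isUnit_C.mpr (Int.cast_ne_zero.mpr hc).isUnit).mul_left_dvd]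
  apply charpoly_dvd_of_aeval_companion_mulVec_eq_zero
  rwa [← algebraMap_int_eq, aeval_map_algebraMap]

lemma aeval_companion_C_add_X_mul_mulVec (n m : ℤ) (g : ℤ[X]) :
    aeval (companion α β) (C n + C m * X + X * g) *ᵥ ![1, 0] =
      ![(n : ℚ), m] + companion α β *ᵥ (aeval (companion α β) g *ᵥ ![1, 0]) := by
  simp only [map_add, map_mul, aeval_C, aeval_X, add_mulVec, ← mulVec_mulVec,
    Algebra.algebraMap_eq_smul_one, smul_mulVec, one_mulVec, companion_mulVec]
  ext i; fin_cases i <;> simp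

lemma exists_eq_aeval_companion_mulVec {x : Fin 2 → ℚ} (hx : x ∈ intSpan (companion α β)) :
    ∃ g : ℤ[X], x = aeval (companion α β) g *ᵥ ![1, 0] := by
  refine intSpan.induction (P := fun x => ∃ g : ℤ[X], x = aeval (companion α β) g *ᵥ ![1, 0])
    ⟨0, by simp⟩ ?_ x hx
  rintro _ - ⟨g, rfl⟩ w
  exact ⟨C (w 0) + C (w 1) * X + X * g, by
    rw [aeval_companion_C_add_X_mul_mulVec, intVec_fin_two]⟩

theorem eq_and_eq_of_digitVec_add_companion_mulVec_eq (hc : c ≠ 0) (ha : (a : ℚ) = c * α)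
    (hb : (b : ℚ) = c * β) (hprim : Int.gcd c (Int.gcd a b) = 1) {ν ν' : ℤ} {y y' : Fin 2 → ℚ}
    (hy : y ∈ intSpan (companion α β)) (hy' : y' ∈ intSpan (companion α β))
    (hν₀ : 0 ≤ ν) (hν : ν < |b|) (hν₀' : 0 ≤ ν') (hν' : ν' < |b|)
    (h : digitVec ν + companion α β *ᵥ y = digitVec ν' + companion α β *ᵥ y') :
    ν = ν' ∧ y = y' := by
  obtain ⟨g, rfl⟩ := exists_eq_aeval_companion_mulVec hy
  obtain ⟨g', rfl⟩ := exists_eq_aeval_companion_mulVec hy'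
  have hq := dvd_of_aeval_companion_mulVec_eq_zero hc ha hb hprim
    (g := C (ν - ν') + C 0 * X + X * (g - g')) <| by
      rw [aeval_companion_C_add_X_mul_mulVec, map_sub, sub_mulVec, mulVec_sub]
      have hd : ![((ν - ν' : ℤ) : ℚ), ((0 : ℤ) : ℚ)] = digitVec ν - digitVec ν' := by
        ext i; fin_cases i <;> simp [digitVec]
      rw [hd]
      linear_combination h
  have hbν : b ∣ ν - ν' := by simpa using eval_dvd (x := 0) hq
  obtain rfl : ν = ν' := by
    have := Int.eq_zero_of_abs_lt_dvd ((abs_dvd b _).mpr hbν)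
      (abs_sub_lt_iff.mpr ⟨by omega, by omega⟩)
    omega
  refine ⟨rfl, mulVec_injective_iff_isUnit.mpr ?_ (add_left_cancel h)⟩
  rw [isUnit_iff_isUnit_det, det_companion, isUnit_iff_ne_zero]
  rintro rfl
  have : b = 0 := by exact_mod_cast hb.trans (mul_zero _)
  simp only [this, abs_zero] at hν
  omega

end Companion

def ReachesZero {X : Type*} [Zero X] (Φ : X → X) (x : X) : Prop :=
  ∃ k : ℕ, Φ^[k] x = 0

namespace ReachesZero

variable {X : Type*} [Zero X] {Φ : X → X} {x y : X}

lemma zero : ReachesZero Φ 0 := ⟨0, rfl⟩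

lemma of_apply_eq (hxy : Φ x = y) (hy : ReachesZero Φ y) : ReachesZero Φ x := by
  obtain ⟨k, hk⟩ := hy
  exact ⟨k + 1, by rw [Function.iterate_succ_apply, hxy, hk]⟩

lemma eq_zero_of_isPeriodicPt (hx : ReachesZero Φ x) (h0 : Φ 0 = 0) {r : ℕ} (hr : 1 ≤ r)
    (hper : Function.IsPeriodicPt Φ r x) : x = 0 := by
  obtain ⟨k, hk⟩ := hx
  calc x = Φ^[r * k] x := (hper.mul_const k).eq.symm
    _ = Φ^[r * k - k] (Φ^[k] x) := by
      rw [← Function.iterate_add_apply, Nat.sub_add_cancel (Nat.le_mul_of_pos_left k hr)]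
    _ = 0 := by rw [hk, Function.iterate_fixed h0]

end ReachesZero

/-- The set `T` of the proof sketch above, as pairs `(t₁, t₂)`. -/
def transitions (a c : ℤ) : Set (ℤ × ℤ) :=
  {t | t.2 = 0 ∧ (t.1 = 0 ∨ t.1 = 1 ∨ t.1 = -1 ∨ t.1 = c ∨ t.1 = -c) ∨
    t.2 = c ∧ (t.1 = a ∨ t.1 = a - c) ∨ t.2 = -c ∧ (t.1 = -a ∨ t.1 = c - a)}

lemma exists_carry_mem_transitions {a b c : ℤ} (hc : 0 < c) (hca : c < a) (hab : a ≤ b) {ν : ℤ}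
    (hν₀ : 0 ≤ ν) (hν : ν < b) {t : ℤ × ℤ} (ht : t ∈ transitions a c) :
    ∃ s : ℤ, 0 ≤ ν + t.1 + s * b ∧ ν + t.1 + s * b < b ∧
      (t.2 + s * a, s * c) ∈ transitions a c := by
  simp only [transitions, Set.mem_ofPred_eq] at ht ⊢
  rcases lt_or_ge (ν + t.1) 0 with h | h
  · exact ⟨1, by simp only [one_mul, true_and]; omega⟩
  rcases lt_or_ge (ν + t.1) b with h' | h'
  · exact ⟨0, by simp only [zero_mul, true_and]; omega⟩
  · exact ⟨-1, by simp only [neg_one_mul, true_and]; omega⟩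

/-- `Φ` is the map `x ↦ A⁻¹ (x - d(x))` of the digit system `(A, 𝒟)`, where `A = companion α β`,
`𝒟 = {(ν, 0)ᵀ : 0 ≤ ν < |b|}` and `cX² + aX + b = c (X² + αX + β)` is primitive. -/
structure IsDigitMap (α β : ℚ) (c a b : ℤ) (Φ : (Fin 2 → ℚ) → Fin 2 → ℚ) : Prop where
  pos : 0 < c
  coeff_a : (a : ℚ) = c * α
  coeff_b : (b : ℚ) = c * β
  gcd_eq_one : Int.gcd c (Int.gcd a b) = 1
  mapsTo : Set.MapsTo Φ (intSpan (companion α β)) (intSpan (companion α β))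
  exists_digit : ∀ x ∈ intSpan (companion α β), ∃ ν : ℤ, 0 ≤ ν ∧ ν ≤ |b| - 1 ∧
    x = digitVec ν + companion α β *ᵥ Φ x

namespace IsDigitMap

variable {α β : ℚ} {c a b : ℤ} {Φ : (Fin 2 → ℚ) → Fin 2 → ℚ} {x y : Fin 2 → ℚ}

lemma apply_eq (hΦ : IsDigitMap α β c a b Φ) (hy : y ∈ intSpan (companion α β)) {d : ℤ}
    (hd₀ : 0 ≤ d) (hd : d ≤ |b| - 1) (h : x = digitVec d + companion α β *ᵥ y) : Φ x = y := by
  have hx : x ∈ intSpan (companion α β) := by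
    rw [h, digitVec_eq_intVec]
    exact intSpan.intVec_add_mulVec_mem hy _
  obtain ⟨ν, hν₀, hν, hxν⟩ := hΦ.exists_digit x hx
  exact (eq_and_eq_of_digitVec_add_companion_mulVec_eq hΦ.pos.ne' hΦ.coeff_a hΦ.coeff_b
    hΦ.gcd_eq_one (hΦ.mapsTo hx) hy hν₀ (by omega) hd₀ (by omega) (hxν.symm.trans h)).2

lemma one_le_abs (hΦ : IsDigitMap α β c a b Φ) : 1 ≤ |b| := by
  obtain ⟨ν, hν₀, hν, -⟩ := hΦ.exists_digit 0 intSpan.zero_mem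
  omega

lemma apply_zero (hΦ : IsDigitMap α β c a b Φ) : Φ 0 = 0 :=
  hΦ.apply_eq intSpan.zero_mem le_rfl (by linarith [hΦ.one_le_abs]) (by simp [digitVec_zero])

lemma apply_mulVec (hΦ : IsDigitMap α β c a b Φ) (hx : x ∈ intSpan (companion α β)) :
    Φ (companion α β *ᵥ x) = x :=
  hΦ.apply_eq hx le_rfl (by linarith [hΦ.one_le_abs]) (by simp [digitVec_zero])

lemma apply_add_intVec (hΦ : IsDigitMap α β c a b Φ) (hx : x ∈ intSpan (companion α β)) {ν : ℤ}
    (hν : x = digitVec ν + companion α β *ᵥ Φ x) (s u v : ℤ) (h₀ : 0 ≤ ν + u + s * b)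
    (h₁ : ν + u + s * b ≤ |b| - 1) :
    Φ (x + intVec ![u, v]) = Φ x + intVec ![v + s * a, s * c] := by
  refine hΦ.apply_eq (intSpan.add_intVec_mem (hΦ.mapsTo hx) _) h₀ h₁ ?_
  conv_lhs => rw [hν]
  simp only [mulVec_add, intVec_fin_two, cons_val_zero, cons_val_one, cons_val_fin_one,
    companion_mulVec]
  ext i; fin_cases i <;> simp [digitVec]
  · linear_combination -(s : ℚ) * hΦ.coeff_b
  · linear_combination -(s : ℚ) * hΦ.coeff_a

lemma apply_intVec (hΦ : IsDigitMap α β c a b Φ) (s u v : ℤ) (h₀ : 0 ≤ u + s * b)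
    (h₁ : u + s * b ≤ |b| - 1) : Φ (intVec ![u, v]) = intVec ![v + s * a, s * c] := by
  have h := hΦ.apply_add_intVec intSpan.zero_mem (ν := 0)
    (by simp [hΦ.apply_zero, digitVec_zero]) s u v (by omega) (by omega)
  rwa [zero_add, hΦ.apply_zero, zero_add] at h

lemma exists_apply_add_eq (hΦ : IsDigitMap α β c a b Φ) (hca : c < a) (hab : a ≤ b)
    (hx : x ∈ intSpan (companion α β)) {t : ℤ × ℤ} (ht : t ∈ transitions a c) :
    ∃ t' ∈ transitions a c, Φ (x + intVec ![t.1, t.2]) = Φ x + intVec ![t'.1, t'.2] := by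
  have hc := hΦ.pos
  obtain ⟨ν, hν₀, hν, hxν⟩ := hΦ.exists_digit x hx
  rw [abs_of_pos (by omega)] at hν
  obtain ⟨s, hs₀, hs, hst⟩ := exists_carry_mem_transitions hΦ.pos hca hab hν₀ (by omega) ht
  exact ⟨_, hst, hΦ.apply_add_intVec hx hxν s _ _ hs₀ (by rw [abs_of_pos (by omega)]; omega)⟩

lemma reachesZero_of_mem_transitions (hΦ : IsDigitMap α β c a b Φ) (hca : c < a) (hab : a ≤ b)
    {t : ℤ × ℤ} (ht : t ∈ transitions a c) : ReachesZero Φ (intVec ![t.1, t.2]) := by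
  have hc := hΦ.pos
  have step : ∀ s u v u' v' : ℤ, 0 ≤ u + s * b → u + s * b < b → v + s * a = u' → s * c = v' →
      ReachesZero Φ (intVec ![u', v']) → ReachesZero Φ (intVec ![u, v]) := by
    rintro s u v _ _ h₀ h₁ rfl rfl
    exact .of_apply_eq (hΦ.apply_intVec s u v h₀ (by rw [abs_of_pos (by omega)]; omega))
  have r₀ : ReachesZero Φ (intVec ![0, 0]) := intVec_zero_zero ▸ .zero
  have r₁ := step 0 1 0 0 0 (by omega) (by omega) (by ring) (by ring) r₀
  have rc := step 0 c 0 0 0 (by omega) (by omega) (by ring) (by ring) r₀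
  have rac := step 0 (a - c) c c 0 (by omega) (by omega) (by ring) (by ring) rc
  have rca := step 1 (c - a) (-c) (a - c) c (by omega) (by omega) (by ring) (by ring) rac
  have ra' := step 1 (-a) (-c) (a - c) c (by omega) (by omega) (by ring) (by ring) rac
  have ra : ReachesZero Φ (intVec ![a, c]) := by
    rcases hab.lt_or_eq with hab | rfl
    · exact step 0 a c c 0 (by omega) (by omega) (by ring) (by ring) rc
    · exact step (-1) a c (c - a) (-c) (by omega) (by omega) (by ring) (by ring) rca
  have r₁' := step 1 (-1) 0 a c (by omega) (by omega) (by ring) (by ring) ra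
  have rc' := step 1 (-c) 0 a c (by omega) (by omega) (by ring) (by ring) ra
  obtain ⟨t₁, t₂⟩ := t
  simp only [transitions, Set.mem_ofPred_eq] at ht
  rcases ht with ⟨rfl, rfl | rfl | rfl | rfl | rfl⟩ | ⟨rfl, rfl | rfl⟩ | ⟨rfl, rfl | rfl⟩ <;>
    assumption

lemma reachesZero_add_of_mem_transitions (hΦ : IsDigitMap α β c a b Φ) (hca : c < a)
    (hab : a ≤ b) (hx : x ∈ intSpan (companion α β)) (hx₀ : ReachesZero Φ x) {t : ℤ × ℤ}
    (ht : t ∈ transitions a c) : ReachesZero Φ (x + intVec ![t.1, t.2]) := by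
  obtain ⟨k, hk⟩ := hx₀
  induction k generalizing x t with
  | zero =>
    obtain rfl : x = 0 := hk
    simpa using hΦ.reachesZero_of_mem_transitions hca hab ht
  | succ k ih =>
    obtain ⟨t', ht', h⟩ := hΦ.exists_apply_add_eq hca hab hx ht
    exact .of_apply_eq h (ih (hΦ.mapsTo hx) ht' hk)

lemma reachesZero_add_intVec (hΦ : IsDigitMap α β c a b Φ) (hca : c < a) (hab : a ≤ b)
    (hx : x ∈ intSpan (companion α β)) (hx₀ : ReachesZero Φ x) (m : ℤ) :
    ReachesZero Φ (x + intVec ![m, 0]) := by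
  have add_unit : ∀ n e : ℤ, e = 1 ∨ e = -1 → ReachesZero Φ (x + intVec ![n, 0]) →
      ReachesZero Φ (x + intVec ![n + e, 0]) := by
    intro n e he hn
    have h := hΦ.reachesZero_add_of_mem_transitions hca hab
      (intSpan.add_intVec_mem hx ![n, 0]) hn (t := (e, 0)) (by
        simp only [transitions, Set.mem_ofPred_eq, true_and]; omega)
    rwa [add_assoc, ← intVec_add, show ![n, 0] + ![e, 0] = ![n + e, 0] by simp] at h
  induction m using Int.induction_on with
  | zero => simpa [intVec_zero_zero] using hx₀
  | succ n ih => exact add_unit n 1 (by simp) ih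
  | pred n ih => exact add_unit (-n) (-1) (by simp) ih

theorem reachesZero_of_mem (hΦ : IsDigitMap α β c a b Φ) (hca : c < a) (hab : a ≤ b) :
    ∀ x ∈ intSpan (companion α β), ReachesZero Φ x := by
  refine intSpan.induction .zero fun x hx hx₀ w => ?_
  have hx' := intSpan.add_intVec_mem hx ![w 1, 0]
  have hw : intVec w + companion α β *ᵥ x =
      companion α β *ᵥ (x + intVec ![w 1, 0]) + intVec ![w 0, 0] := by
    simp only [mulVec_add, intVec_fin_two, cons_val_zero, cons_val_one, cons_val_fin_one,
      companion_mulVec]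
    ext i; fin_cases i <;> simp <;> ring
  rw [hw]
  exact hΦ.reachesZero_add_intVec hca hab (intSpan.mulVec_mem hx') (.of_apply_eq
    (hΦ.apply_mulVec hx') (hΦ.reachesZero_add_intVec hca hab hx hx₀ _)) _

end IsDigitMap

theorem stmt16_general (α β : ℚ) (hα : 1 < α) (hαβ2 : α ≤ β)
    (c a b : ℤ) (hc : 0 < c)
    (ha : (a : ℚ) = (c : ℚ) * α) (hb : (b : ℚ) = (c : ℚ) * β)
    (hprim : Int.gcd c (Int.gcd a b) = 1)
    (A : Matrix (Fin 2) (Fin 2) ℚ) (hA : A = !![0, -β; 1, -α])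
    (Φ : (Fin 2 → ℚ) → Fin 2 → ℚ)
    (hΦmem : ∀ x ∈ intSpan A, Φ x ∈ intSpan A)
    (hΦ : ∀ x ∈ intSpan A, ∃ ν : ℤ, 0 ≤ ν ∧ ν ≤ |b| - 1 ∧
      x = digitVec ν + A.mulVec (Φ x))
     :
    (∀ x ∈ intSpan A, ∃ k : ℕ, Φ^[k] x = 0) ∧
    {x | x ∈ intSpan A ∧ ∃ r : ℕ, 1 ≤ r ∧ Φ^[r] x = x} = {0} := by
  subst hA
  have hD : IsDigitMap α β c a b Φ := ⟨hc, ha, hb, hprim, hΦmem, hΦ⟩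
  have hcq : (0 : ℚ) < c := by exact_mod_cast hc
  have hca : c < a := by exact_mod_cast (show (c : ℚ) < a by rw [ha]; nlinarith)
  have hab : a ≤ b := by exact_mod_cast (show (a : ℚ) ≤ b by rw [ha, hb]; nlinarith)
  have hfin := hD.reachesZero_of_mem hca hab
  refine ⟨hfin, Set.eq_singleton_iff_unique_mem.mpr
    ⟨⟨intSpan.zero_mem, 1, le_rfl, hD.apply_zero⟩, ?_⟩⟩
  rintro x ⟨hx, r, hr, hper⟩
  exact (hfin x hx).eq_zero_of_isPeriodicPt hD.apply_zero hr hper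

/-- if `α > 1` and `β - 1 ≤ α ≤ β`, then `(A, 𝒟)` has the
finiteness property and the attractor (set of periodic points of `Φ`) is `{0}`. -/
theorem stmt16 (α β : ℚ) (hα : 1 < α) (hαβ1 : β - 1 ≤ α) (hαβ2 : α ≤ β)
    (hirr : Irreducible (X ^ 2 + C α * X + C β : ℚ[X]))
    (hexp : ∀ z : ℂ, z ^ 2 + (α : ℂ) * z + (β : ℂ) = 0 → 1 < ‖z‖)
    (c a b : ℤ) (hc : 0 < c)
    (ha : (a : ℚ) = (c : ℚ) * α) (hb : (b : ℚ) = (c : ℚ) * β)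
    (hprim : Int.gcd c (Int.gcd a b) = 1)
    (A : Matrix (Fin 2) (Fin 2) ℚ) (hA : A = !![0, -β; 1, -α])
    (Φ : (Fin 2 → ℚ) → Fin 2 → ℚ)
    (hΦmem : ∀ x ∈ intSpan A, Φ x ∈ intSpan A)
    (hΦ : ∀ x ∈ intSpan A, ∃ ν : ℤ, 0 ≤ ν ∧ ν ≤ |b| - 1 ∧
      x = digitVec ν + A.mulVec (Φ x))
     :
    (∀ x ∈ intSpan A, ∃ k : ℕ, Φ^[k] x = 0) ∧
    {x | x ∈ intSpan A ∧ ∃ r : ℕ, 1 ≤ r ∧ Φ^[r] x = x} = {0} :=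
  stmt16_general α β hα hαβ2 c a b hc ha hb hprim A hA Φ hΦmem hΦ

end
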